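/- Let ε > 0 and let K₁, K₂ be symmetric positive definite n×n matrices. Then the matrix Ŝ = (ε/8)·K₂^{−1/2}·(−ε·I + (ε²·I + 16·K₂^{1/2} K₁ K₂^{1/2})^{1/2})·K₂^{−1/2} is symmetric positive definite and solves the continuous algebraic Riccati equation ε²·K₁ − ε²·S − 4·S K₂ S = 0; moreover K₁ − Ŝ is positive definite. -/

import Mathlib

/-!
Write `Q = K₂^{1/2}`, `R = (ε² I + 16 Q K₁ Q)^{1/2}` and `X = Q⁻¹ (R - ε I) Q⁻¹`, so that
`Ŝ = (ε/8) X`. Since `R² - ε² I = 16 Q K₁ Q` is positive definite, the spectrum of `R` lies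
above `ε`, so `R - ε I` and hence `X` are positive definite. Moreover
`(R - ε I)² + 2ε (R - ε I) = R² - ε² I` turns into the quadratic matrix equation
`X K₂ X + 2ε X = 16 K₁`, from which both the Riccati equation and
`K₁ - Ŝ = X K₂ X / 16` follow by linear algebra.
-/

open Matrix
open scoped Classical

noncomputable section

/-- The unique symmetric positive semidefinite square root of a positive
semidefinite matrix (junk value `0` otherwise). -/
def sqrtm {n : ℕ} (A : Matrix (Fin n) (Fin n) ℝ) : Matrix (Fin n) (Fin n) ℝ :=
  if h : A.PosSemidef then
    h.1.eigenvectorUnitary.1 * diagonal ((↑) ∘ (√·) ∘ h.1.eigenvalues) *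
      (star h.1.eigenvectorUnitary : Matrix (Fin n) (Fin n) ℝ)
  else 0

end

namespace Matrix

open scoped ComplexOrder

variable {ι 𝕜 : Type*} [Fintype ι] [DecidableEq ι] [RCLike 𝕜]

lemma IsHermitian.posDef_cfc_iff {A : Matrix ι ι 𝕜} (hA : A.IsHermitian) (f : ℝ → ℝ) :
    (cfc f A).PosDef ↔ ∀ i, 0 < f (hA.eigenvalues i) := by
  rw [hA.cfc_eq, IsHermitian.cfc, Unitary.conjStarAlgAut_apply,
    (Unitary.isUnit_coe).posDef_star_right_conjugate_iff, posDef_diagonal_iff]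
  simp

lemma PosDef.mul_mul_of_isHermitian {A B : Matrix ι ι 𝕜} (hA : A.PosDef) (hB : B.IsHermitian)
    (hBu : IsUnit B) : (B * A * B).PosDef := by
  simpa [star_eq_conjTranspose, hB.eq] using hBu.posDef_star_right_conjugate_iff.mpr hA

lemma IsHermitian.cfc_sub_smul_one {A : Matrix ι ι 𝕜} (hA : A.IsHermitian) (f : ℝ → ℝ) (c : ℝ) :
    cfc f A - c • 1 = cfc (fun x => f x - c) A := by
  rw [cfc_sub f (fun _ => c) A (A.finite_real_spectrum.continuousOn f),
    cfc_const c A hA.isSelfAdjoint, Algebra.algebraMap_eq_smul_one]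

end Matrix

section sqrtm

variable {n : ℕ}

lemma sqrtm_eq_cfc {A : Matrix (Fin n) (Fin n) ℝ} (hA : A.PosSemidef) :
    sqrtm A = cfc Real.sqrt A := by
  rw [sqrtm, dif_pos hA, hA.1.cfc_eq, IsHermitian.cfc, Unitary.conjStarAlgAut_apply]
  rfl

lemma sqrtm_mul_self {A : Matrix (Fin n) (Fin n) ℝ} (hA : A.PosSemidef) :
    sqrtm A * sqrtm A = A := by
  rw [sqrtm_eq_cfc hA, ← cfc_mul Real.sqrt Real.sqrt A]
  conv_rhs => rw [← cfc_id' ℝ A hA.1.isSelfAdjoint]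
  refine cfc_congr fun x hx => ?_
  obtain ⟨i, rfl⟩ := hA.1.spectrum_real_eq_range_eigenvalues ▸ hx
  exact Real.mul_self_sqrt (hA.eigenvalues_nonneg i)

lemma posDef_sqrtm {A : Matrix (Fin n) (Fin n) ℝ} (hA : A.PosDef) : (sqrtm A).PosDef := by
  rw [sqrtm_eq_cfc hA.posSemidef, hA.1.posDef_cfc_iff]
  exact fun i => Real.sqrt_pos.mpr (hA.eigenvalues_pos i)

lemma posDef_sqrtm_sub_smul_one {A : Matrix (Fin n) (Fin n) ℝ} {c : ℝ} (hc : 0 ≤ c)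
    (h : (A - c ^ 2 • 1).PosDef) : (sqrtm A - c • 1).PosDef := by
  have hA : A.PosSemidef := by
    simpa using h.posSemidef.add (PosSemidef.one.smul (sq_nonneg c))
  rw [← cfc_id' ℝ A hA.1.isSelfAdjoint, hA.1.cfc_sub_smul_one, hA.1.posDef_cfc_iff] at h
  rw [sqrtm_eq_cfc hA, hA.1.cfc_sub_smul_one, hA.1.posDef_cfc_iff]
  exact fun i => sub_pos.mpr (Real.lt_sqrt hc |>.mpr (sub_pos.mp (h i)))

end sqrtm

lemma inv_mul_mul_inv_quadratic_eq {ι R : Type*} [Fintype ι] [DecidableEq ι] [CommRing R]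
    {Q T K : Matrix ι ι R} {c : R} (hQ : IsUnit Q) (hT : T * T + c • T = Q * K * Q) :
    (Q⁻¹ * T * Q⁻¹) * (Q * Q) * (Q⁻¹ * T * Q⁻¹) + c • (Q⁻¹ * T * Q⁻¹) = K := by
  have hQ' := (isUnit_iff_isUnit_det Q).mp hQ
  calc (Q⁻¹ * T * Q⁻¹) * (Q * Q) * (Q⁻¹ * T * Q⁻¹) + c • (Q⁻¹ * T * Q⁻¹)
      = Q⁻¹ * (T * T + c • T) * Q⁻¹ := by
        simp only [Matrix.mul_assoc, Matrix.mul_add, Matrix.add_mul, Matrix.mul_smul,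
          Matrix.smul_mul, nonsing_inv_mul_cancel_left _ _ hQ', mul_nonsing_inv_cancel_left _ _ hQ']
    _ = K := by
        rw [hT, Matrix.mul_assoc, mul_nonsing_inv_cancel_right _ _ hQ',
          nonsing_inv_mul_cancel_left _ _ hQ']

lemma riccati_solution_of_quadratic_eq {ι : Type*} [Fintype ι] [DecidableEq ι] {ε : ℝ}
    (hε : 0 < ε) {K₁ K₂ X S : Matrix ι ι ℝ} (hK₂ : K₂.PosDef) (hX : X.PosDef)
    (hK₁ : X * K₂ * X + (2 * ε) • X = (16 : ℝ) • K₁) (hS : S = (ε / 8) • X) :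
    S.PosDef ∧ ε ^ 2 • K₁ - ε ^ 2 • S - (4 : ℝ) • (S * K₂ * S) = 0 ∧ (K₁ - S).PosDef := by
  have hK₁' : K₁ = (16 : ℝ)⁻¹ • (X * K₂ * X + (2 * ε) • X) := by
    rw [hK₁, smul_smul]; norm_num
  subst hS hK₁'
  refine ⟨hX.smul (by positivity), ?_, ?_⟩
  · simp only [Matrix.smul_mul, Matrix.mul_smul, smul_smul, smul_add]
    module
  · have hK : (16 : ℝ)⁻¹ • (X * K₂ * X + (2 * ε) • X) - (ε / 8) • X =
        (16 : ℝ)⁻¹ • (X * K₂ * X) := by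
      module
    rw [hK]
    exact (hK₂.mul_mul_of_isHermitian hX.1 hX.isUnit).smul (by norm_num)

theorem stmt_18 {n : ℕ} (ε : ℝ) (hε : 0 < ε)
    (K₁ K₂ : Matrix (Fin n) (Fin n) ℝ) (hK₁ : K₁.PosDef) (hK₂ : K₂.PosDef)
    (S : Matrix (Fin n) (Fin n) ℝ)
    (hS : S = (ε / 8) • ((sqrtm K₂)⁻¹ *
      (-(ε • (1 : Matrix (Fin n) (Fin n) ℝ)) +
        sqrtm (ε ^ 2 • (1 : Matrix (Fin n) (Fin n) ℝ) + (16 : ℝ) • (sqrtm K₂ * K₁ * sqrtm K₂))) *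
      (sqrtm K₂)⁻¹)) :
    S.PosDef ∧ ε ^ 2 • K₁ - ε ^ 2 • S - (4 : ℝ) • (S * K₂ * S) = 0 ∧ (K₁ - S).PosDef := by
  set Q := sqrtm K₂
  have hQ : Q.PosDef := posDef_sqrtm hK₂
  have hQKQ : (Q * K₁ * Q).PosDef := hK₁.mul_mul_of_isHermitian hQ.1 hQ.isUnit
  set R := sqrtm (ε ^ 2 • (1 : Matrix (Fin n) (Fin n) ℝ) + (16 : ℝ) • (Q * K₁ * Q))
  have hRR : R * R = ε ^ 2 • 1 + (16 : ℝ) • (Q * K₁ * Q) :=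
    sqrtm_mul_self ((PosSemidef.one.smul (sq_nonneg ε)).add (hQKQ.smul (by norm_num)).posSemidef)
  have hT : (R - ε • 1).PosDef :=
    posDef_sqrtm_sub_smul_one hε.le (by simpa using hQKQ.smul (by norm_num : (0 : ℝ) < 16))
  have hTT : (R - ε • 1) * (R - ε • 1) + (2 * ε) • (R - ε • 1) = Q * ((16 : ℝ) • K₁) * Q := by
    simp only [Matrix.sub_mul, Matrix.mul_sub, Matrix.smul_mul, Matrix.mul_smul, Matrix.one_mul,
      Matrix.mul_one, hRR]
    module
  refine riccati_solution_of_quadratic_eq hε hK₂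
    (hT.mul_mul_of_isHermitian hQ.inv.1 hQ.inv.isUnit) ?_ (by rw [hS, neg_add_eq_sub])
  rw [← inv_mul_mul_inv_quadratic_eq hQ.isUnit hTT, sqrtm_mul_self hK₂.posSemidef]
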